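/- If G is a minimal counterexample (as defined in the context), then G has no vertex of degree at least 1 all of whose neighbors have degree at most 2. -/

import Mathlib

open Set

/-- The degree of a vertex `v` in a simple graph `G`. -/
noncomputable def deg {V : Type*} (G : SimpleGraph V) (v : V) : ℕ :=
  (G.neighborSet v).ncard

/-- `S` is a dominating set of `G`: every vertex not in `S` has a neighbor in `S`. -/
def IsDomSet {V : Type*} (G : SimpleGraph V) (S : Set V) : Prop :=
  ∀ v ∉ S, ∃ u ∈ S, G.Adj u v

/-- `S` is an independent dominating set of `G`. -/
def IsIndepDomSet {V : Type*} (G : SimpleGraph V) (S : Set V) : Prop :=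
  IsDomSet G S ∧ ∀ u ∈ S, ∀ v ∈ S, ¬ G.Adj u v

/-- The independent domination number `i(G)`. -/
noncomputable def indepDomNum {V : Type*} (G : SimpleGraph V) : ℕ :=
  sInf {n | ∃ S : Set V, IsIndepDomSet G S ∧ S.ncard = n}

/-- The domination number `γ(G)`. -/
noncomputable def domNum {V : Type*} (G : SimpleGraph V) : ℕ :=
  sInf {n | ∃ S : Set V, IsDomSet G S ∧ S.ncard = n}

/-- `G` contains no cycle on 4 vertices as a subgraph. -/
def NoFourCycle {V : Type*} (G : SimpleGraph V) : Prop :=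
  ¬ ∃ a b c d : V, a ≠ b ∧ a ≠ c ∧ a ≠ d ∧ b ≠ c ∧ b ≠ d ∧ c ≠ d ∧
      G.Adj a b ∧ G.Adj b c ∧ G.Adj c d ∧ G.Adj d a

/-- `nk G k` is the number of vertices of degree `k` in `G`. -/
noncomputable def nk {V : Type*} (G : SimpleGraph V) (k : ℕ) : ℕ :=
  {v | deg G v = k}.ncard

/-- The weight of a vertex: 14, 9, 6, 5 according as its degree is 0, 1, 2, 3. -/
noncomputable def wt {V : Type*} (G : SimpleGraph V) (v : V) : ℕ :=
  if deg G v = 0 then 14 else if deg G v = 1 then 9 else if deg G v = 2 then 6 else 5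

/-- The weight of a set of vertices: the sum of their weights. -/
noncomputable def wtSet {V : Type*} (G : SimpleGraph V) (X : Set V) : ℕ :=
  ∑ᶠ v ∈ X, wt G v

/-- The weight of the whole graph `G`. -/
noncomputable def wtGraph {V : Type*} (G : SimpleGraph V) : ℕ :=
  wtSet G Set.univ

/-- `G` is a minimal counterexample: subcubic, no 4-cycle, `14·i(G) > w(G)`,
and every proper subgraph `H` of `G` satisfies `14·i(H) ≤ w(H)`. -/
def MinimalCounterexample {V : Type*} [Fintype V] (G : SimpleGraph V) : Prop :=
  (∀ v, deg G v ≤ 3) ∧ NoFourCycle G ∧ wtGraph G < 14 * indepDomNum G ∧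
    ∀ H : G.Subgraph, H ≠ ⊤ → 14 * indepDomNum H.coe ≤ wtGraph H.coe

/-!
If `D` is an independent set and `A = N[D]` its closed neighbourhood, then any independent
dominating set of the proper subgraph `G - A` extends by `D` to one of `G`, so
`i(G) ≤ i(G - A) + |D|`. Minimality gives `14 i(G - A) ≤ w(G - A)`, hence a minimal
counterexample satisfies `w(A) < 14 |D| + g`, where `g` is the weight gained by the vertices
outside `A` whose degree drops. A non-isolated vertex all of whose neighbours have degree at
most 2 lies in one of a few local configurations (a degree-3 vertex, a pendant vertex, a path
of degree-2 vertices, a short cycle of degree-2 vertices), and each of them admits a choice of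
`D` violating this inequality; the absence of 4-cycles bounds the number of edges a boundary
vertex loses.
-/

section

open SimpleGraph

variable {V : Type*}

section IndependentDomination

variable (G : SimpleGraph V)

lemma exists_isIndepDomSet [Finite V] : ∃ S : Set V, IsIndepDomSet G S := by
  obtain ⟨S, hS, hmax⟩ := Finite.exists_maximalFor id G.IsIndepSet (Set.toFinite _)
    ⟨∅, Set.pairwise_empty _⟩
  refine ⟨S, fun v hv => ?_, fun u hu w hw huw => hS hu hw (G.ne_of_adj huw) huw⟩
  by_contra! hnd
  have hins : G.IsIndepSet (insert v S) :=
    hS.insert fun u hu _ => ⟨fun h => hnd u hu h.symm, hnd u hu⟩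
  exact hv (hmax hins (Set.subset_insert v S) (Set.mem_insert v S))

lemma indepDomNum_le_ncard {S : Set V} (hS : IsIndepDomSet G S) : indepDomNum G ≤ S.ncard :=
  Nat.sInf_le ⟨S, hS, rfl⟩

lemma exists_isIndepDomSet_ncard_eq [Finite V] :
    ∃ S : Set V, IsIndepDomSet G S ∧ S.ncard = indepDomNum G :=
  have ⟨S, hS⟩ := exists_isIndepDomSet G
  Nat.sInf_mem (s := {n | ∃ S : Set V, IsIndepDomSet G S ∧ S.ncard = n}) ⟨S.ncard, S, hS, rfl⟩

end IndependentDomination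

section Deletion

variable (G : SimpleGraph V)

def closedNbhd (D : Set V) : Set V := D ∪ {x | ∃ d ∈ D, G.Adj d x}

variable {G}

lemma mem_closedNbhd {D : Set V} {x : V} :
    x ∈ closedNbhd G D ↔ x ∈ D ∨ ∃ d ∈ D, G.Adj d x :=
  Iff.rfl

lemma mem_deleteVerts_top_verts {A : Set V} {x : V} :
    x ∈ ((⊤ : G.Subgraph).deleteVerts A).verts ↔ x ∉ A := by
  simp

lemma deleteVerts_coe_adj {A : Set V} {x y : ((⊤ : G.Subgraph).deleteVerts A).verts} :
    ((⊤ : G.Subgraph).deleteVerts A).coe.Adj x y ↔ G.Adj x y := by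
  simp [mem_deleteVerts_top_verts.1 x.2, mem_deleteVerts_top_verts.1 y.2]

lemma deg_deleteVerts {A : Set V} (x : ((⊤ : G.Subgraph).deleteVerts A).verts) :
    deg ((⊤ : G.Subgraph).deleteVerts A).coe x = (G.neighborSet x \ A).ncard := by
  rw [deg, ← Set.ncard_image_of_injective _ Subtype.val_injective]
  congr 1
  ext y
  simp only [Set.mem_image, mem_neighborSet, deleteVerts_coe_adj, Set.mem_sdiff]
  constructor
  · rintro ⟨y, hxy, rfl⟩
    exact ⟨hxy, mem_deleteVerts_top_verts.1 y.2⟩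
  · rintro ⟨hxy, hy⟩
    exact ⟨⟨y, mem_deleteVerts_top_verts.2 hy⟩, hxy, rfl⟩

lemma deleteVerts_ne_top {A : Set V} (hA : A.Nonempty) : (⊤ : G.Subgraph).deleteVerts A ≠ ⊤ := by
  obtain ⟨a, ha⟩ := hA
  intro h
  have : a ∈ ((⊤ : G.Subgraph).deleteVerts A).verts := by rw [h]; trivial
  exact mem_deleteVerts_top_verts.1 this ha

lemma indepDomNum_le_deleteVerts_closedNbhd_add [Finite V] {D : Set V} (hD : G.IsIndepSet D) :
    indepDomNum G ≤
      indepDomNum ((⊤ : G.Subgraph).deleteVerts (closedNbhd G D)).coe + D.ncard := by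
  set H := ((⊤ : G.Subgraph).deleteVerts (closedNbhd G D)).coe
  obtain ⟨S, ⟨hSdom, hSind⟩, hScard⟩ := exists_isIndepDomSet_ncard_eq H
  have hS_out : ∀ u ∈ Subtype.val '' S, u ∉ closedNbhd G D := by
    rintro _ ⟨u, -, rfl⟩
    exact mem_deleteVerts_top_verts.1 u.2
  have hIDS : IsIndepDomSet G (Subtype.val '' S ∪ D) := by
    refine ⟨fun x hx => ?_, ?_⟩
    · by_cases hxA : x ∈ closedNbhd G D
      · rcases hxA with hxD | ⟨d, hd, hdx⟩
        · exact absurd (Or.inr hxD) hx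
        · exact ⟨d, Or.inr hd, hdx⟩
      · obtain ⟨u, hu, hux⟩ :=
          hSdom ⟨x, mem_deleteVerts_top_verts.2 hxA⟩ fun h => hx (Or.inl ⟨_, h, rfl⟩)
        exact ⟨u, Or.inl ⟨u, hu, rfl⟩, deleteVerts_coe_adj.1 hux⟩
    · rintro u (⟨u, hu, rfl⟩ | hu) w (⟨w, hw, rfl⟩ | hw) huw
      · exact hSind u hu w hw (deleteVerts_coe_adj.2 huw)
      · exact hS_out _ ⟨u, hu, rfl⟩ (Or.inr ⟨w, hw, huw.symm⟩)
      · exact hS_out _ ⟨w, hw, rfl⟩ (Or.inr ⟨u, hu, huw⟩)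
      · exact hD hu hw (G.ne_of_adj huw) huw
  calc indepDomNum G ≤ (Subtype.val '' S ∪ D).ncard := indepDomNum_le_ncard G hIDS
    _ ≤ (Subtype.val '' S).ncard + D.ncard := Set.ncard_union_le _ _
    _ = indepDomNum H + D.ncard := by
      rw [Set.ncard_image_of_injective _ Subtype.val_injective, hScard]

end Deletion

lemma finsum_mem_mono {α : Type*} [Finite α] {s : Set α} {f g : α → ℕ} (h : ∀ x ∈ s, f x ≤ g x) :
    ∑ᶠ x ∈ s, f x ≤ ∑ᶠ x ∈ s, g x := by
  rw [finsum_mem_eq_finite_toFinset_sum _ (Set.toFinite s),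
    finsum_mem_eq_finite_toFinset_sum _ (Set.toFinite s)]
  exact Finset.sum_le_sum fun x hx => h x ((Set.Finite.mem_toFinset _).1 hx)

lemma finsum_mem_le_sum {α : Type*} [Finite α] {s : Set α} {f b : α → ℕ} (E : Finset α)
    (h0 : ∀ x ∈ s, x ∉ E → f x = 0) (hb : ∀ x ∈ s, x ∈ E → f x ≤ b x) :
    ∑ᶠ x ∈ s, f x ≤ ∑ x ∈ E, b x := by
  classical
  have hs := Set.toFinite s
  rw [finsum_mem_eq_finite_toFinset_sum _ hs,
    ← Finset.sum_filter_of_ne fun x hx hfx => by_contra fun hxE =>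
      hfx (h0 x ((Set.Finite.mem_toFinset _).1 hx) hxE)]
  calc ∑ x ∈ hs.toFinset with x ∈ E, f x ≤ ∑ x ∈ hs.toFinset with x ∈ E, b x :=
        Finset.sum_le_sum fun x hx => by
          rw [Finset.mem_filter, Set.Finite.mem_toFinset] at hx
          exact hb x hx.1 hx.2
    _ ≤ ∑ x ∈ E, b x := Finset.sum_le_sum_of_subset fun x hx => (Finset.mem_filter.1 hx).2

section Weight

def degWeight (d : ℕ) : ℕ :=
  if d = 0 then 14 else if d = 1 then 9 else if d = 2 then 6 else 5

lemma degWeight_antitone : Antitone degWeight := by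
  intro a b hab
  unfold degWeight
  split_ifs <;> omega

variable {G : SimpleGraph V}

lemma wt_eq_degWeight (v : V) : wt G v = degWeight (deg G v) := rfl

lemma six_le_wt {v : V} (h : deg G v ≤ 2) : 6 ≤ wt G v := by
  rw [wt_eq_degWeight]; unfold degWeight; split_ifs <;> omega

lemma wtGraph_eq_wtSet_add_wtSet_compl [Finite V] (A : Set V) :
    wtGraph G = wtSet G A + wtSet G Aᶜ := by
  rw [wtGraph, wtSet, wtSet, wtSet, ← Set.union_compl_self A,
    finsum_mem_union disjoint_compl_right (Set.toFinite _) (Set.toFinite _)]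

lemma wtGraph_deleteVerts [Finite V] (A : Set V) :
    wtGraph ((⊤ : G.Subgraph).deleteVerts A).coe =
      ∑ᶠ x ∈ Aᶜ, degWeight (G.neighborSet x \ A).ncard := by
  have hrange :
      Set.range (Subtype.val : ((⊤ : G.Subgraph).deleteVerts A).verts → V) = Aᶜ := by
    ext x; simp
  rw [← hrange, finsum_mem_range Subtype.val_injective, wtGraph, wtSet, finsum_mem_univ]
  exact finsum_congr fun x => by rw [wt_eq_degWeight, deg_deleteVerts]

variable (G) in
noncomputable def weightGain (A : Set V) (x : V) : ℕ :=
  degWeight (G.neighborSet x \ A).ncard - wt G x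

lemma weightGain_eq_zero {A : Set V} {x : V} (hx : ∀ w ∈ A, ¬ G.Adj x w) :
    weightGain G A x = 0 := by
  have : G.neighborSet x \ A = G.neighborSet x :=
    sdiff_eq_left.2 (Set.disjoint_left.2 fun w hxw hw => hx w hw hxw)
  rw [weightGain, this, wt_eq_degWeight, deg, Nat.sub_self]

lemma weightGain_le [Finite V] {A : Set V} {x : V} {k : ℕ}
    (hk : (G.neighborSet x ∩ A).ncard ≤ k) :
    weightGain G A x ≤ degWeight (deg G x - k) - degWeight (deg G x) := by
  have := Set.ncard_inter_add_ncard_sdiff_eq_ncard (G.neighborSet x) A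
  rw [weightGain, wt_eq_degWeight]
  exact Nat.sub_le_sub_right (degWeight_antitone (by rw [deg]; omega)) _

lemma weightGain_le_five [Finite V] {A : Set V} {x : V}
    (h : (G.neighborSet x ∩ A).ncard ≤ 1) : weightGain G A x ≤ 5 :=
  (weightGain_le h).trans (by unfold degWeight; split_ifs <;> omega)

lemma ncard_neighborSet_inter_le_one [Finite V] {A : Set V} {x : V}
    (h : ∀ w₁ ∈ A, ∀ w₂ ∈ A, G.Adj x w₁ → G.Adj x w₂ → w₁ = w₂) :
    (G.neighborSet x ∩ A).ncard ≤ 1 :=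
  (Set.ncard_le_one (Set.toFinite _)).2 fun _ h₁ _ h₂ => h _ h₁.2 _ h₂.2 h₁.1 h₂.1

end Weight

section Neighbors

variable {G : SimpleGraph V} {u v a b c : V}

lemma one_le_deg_of_adj [Finite V] (h : G.Adj v u) : 1 ≤ deg G v :=
  (Set.ncard_pos (Set.toFinite _)).2 ⟨u, h⟩

lemma two_le_deg_of_adj_of_adj [Finite V] (ha : G.Adj v a) (hb : G.Adj v b) (hab : a ≠ b) :
    2 ≤ deg G v := by
  rw [deg, ← Set.ncard_pair hab]
  exact Set.ncard_le_ncard (Set.insert_subset ha (Set.singleton_subset_iff.2 hb))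

lemma deg_eq_one_of_adj_iff (h : ∀ x, G.Adj v x ↔ x = a) : deg G v = 1 := by
  rw [deg, show G.neighborSet v = {a} from Set.ext h, Set.ncard_singleton]

lemma deg_eq_two_of_adj_iff (hab : a ≠ b) (h : ∀ x, G.Adj v x ↔ x = a ∨ x = b) :
    deg G v = 2 := by
  rw [deg, show G.neighborSet v = {a, b} from Set.ext h, Set.ncard_pair hab]

lemma deg_eq_three_of_adj_iff (hab : a ≠ b) (hac : a ≠ c) (hbc : b ≠ c)
    (h : ∀ x, G.Adj v x ↔ x = a ∨ x = b ∨ x = c) : deg G v = 3 := by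
  rw [deg, show G.neighborSet v = {a, b, c} from Set.ext h, Set.ncard_eq_three]
  exact ⟨a, b, c, hab, hac, hbc, rfl⟩

lemma adj_iff_of_deg_eq_one (h : deg G v = 1) (hu : G.Adj v u) :
    ∀ x, G.Adj v x ↔ x = u := by
  obtain ⟨a, ha⟩ := Set.ncard_eq_one.1 h
  have hu' : u ∈ G.neighborSet v := hu
  rw [ha, Set.mem_singleton_iff] at hu'
  subst hu'
  exact Set.ext_iff.1 ha

lemma exists_adj_iff_of_deg_eq_two (h : deg G v = 2) (hu : G.Adj v u) :
    ∃ w, w ≠ u ∧ ∀ x, G.Adj v x ↔ x = u ∨ x = w := by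
  obtain ⟨a, b, hab, hN⟩ := Set.ncard_eq_two.1 h
  have hu' : u ∈ G.neighborSet v := hu
  have hN' := Set.ext_iff.1 hN
  rw [hN] at hu'
  rcases hu' with rfl | rfl
  · exact ⟨b, hab.symm, hN'⟩
  · exact ⟨a, hab, fun x => (hN' x).trans or_comm⟩

lemma adj_iff_of_deg_eq_two (h : deg G v = 2) (ha : G.Adj v a) (hb : G.Adj v b) (hab : a ≠ b) :
    ∀ x, G.Adj v x ↔ x = a ∨ x = b := by
  obtain ⟨w, hwa, hw⟩ := exists_adj_iff_of_deg_eq_two h ha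
  have := (hw b).1 hb
  grind

lemma exists_adj_iff_of_deg_eq_three (h : deg G v = 3) (hu : G.Adj v u) :
    ∃ w₁ w₂, w₁ ≠ u ∧ w₂ ≠ u ∧ w₁ ≠ w₂ ∧ ∀ x, G.Adj v x ↔ x = u ∨ x = w₁ ∨ x = w₂ := by
  obtain ⟨a, b, c, hab, hac, hbc, hN⟩ := Set.ncard_eq_three.1 h
  have hu' : u ∈ G.neighborSet v := hu
  have hN' := Set.ext_iff.1 hN
  simp only [mem_neighborSet, Set.mem_insert_iff, Set.mem_singleton_iff] at hN'
  rw [hN] at hu'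
  rcases hu' with rfl | rfl | rfl
  · exact ⟨b, c, hab.symm, hac.symm, hbc, hN'⟩
  · exact ⟨a, c, hab, hbc.symm, hac, fun x => (hN' x).trans (by tauto)⟩
  · exact ⟨a, b, hac, hbc, hab, fun x => (hN' x).trans (by tauto)⟩

lemma exists_adj_imp_of_deg_le_two [Finite V] (h : deg G v ≤ 2) (hu : G.Adj v u) :
    ∃ w, ∀ x, G.Adj v x → x = u ∨ x = w := by
  rcases (by have := one_le_deg_of_adj hu; omega : deg G v = 1 ∨ deg G v = 2) with h1 | h2
  · exact ⟨u, fun x hx => Or.inl ((adj_iff_of_deg_eq_one h1 hu x).1 hx)⟩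
  · obtain ⟨w, -, hw⟩ := exists_adj_iff_of_deg_eq_two h2 hu
    exact ⟨w, fun x hx => (hw x).1 hx⟩

lemma NoFourCycle.eq_of_adj {d : V} (h : NoFourCycle G) (hac : a ≠ c) (hab : G.Adj a b)
    (hcb : G.Adj c b) (had : G.Adj a d) (hcd : G.Adj c d) : b = d := by
  by_contra hbd
  exact h ⟨a, b, c, d, hab.ne, hac, had.ne, hcb.ne.symm, hbd, hcd.ne, hab, hcb.symm, hcd, had.symm⟩

end Neighbors

namespace MinimalCounterexample

variable [Fintype V] {G : SimpleGraph V}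

theorem deg_le_three (hG : MinimalCounterexample G) (v : V) : deg G v ≤ 3 := hG.1 v

theorem noFourCycle (hG : MinimalCounterexample G) : NoFourCycle G := hG.2.1

theorem wtSet_closedNbhd_lt (hG : MinimalCounterexample G) {D : Set V} (hD : G.IsIndepSet D)
    (hne : D.Nonempty) :
    wtSet G (closedNbhd G D) <
      14 * D.ncard + ∑ᶠ x ∈ (closedNbhd G D)ᶜ, weightGain G (closedNbhd G D) x := by
  obtain ⟨-, -, hlt, hmin⟩ := hG
  have hi := indepDomNum_le_deleteVerts_closedNbhd_add hD
  set A := closedNbhd G D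
  have hmin := hmin _ (deleteVerts_ne_top (hne.mono Set.subset_union_left : A.Nonempty))
  have hw : wtGraph ((⊤ : G.Subgraph).deleteVerts A).coe ≤
      wtSet G Aᶜ + ∑ᶠ x ∈ Aᶜ, weightGain G A x := by
    rw [wtGraph_deleteVerts, wtSet, ← finsum_mem_add_distrib (Set.toFinite _)]
    exact finsum_mem_mono fun x _ => le_add_tsub
  have := wtGraph_eq_wtSet_add_wtSet_compl (G := G) A
  omega

theorem sum_wt_lt_of_closedNbhd_eq (hG : MinimalCounterexample G) {D : Set V} {A : Finset V}
    (hD : G.IsIndepSet D) (hne : D.Nonempty) (hA : closedNbhd G D = ↑A) (E : Finset V)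
    (b : V → ℕ) (hE : ∀ x ∉ A, ∀ w ∈ A, G.Adj x w → x ∈ E)
    (hb : ∀ x ∈ E, x ∉ A → weightGain G ↑A x ≤ b x) :
    ∑ x ∈ A, wt G x < 14 * D.ncard + ∑ x ∈ E, b x := by
  have key := hG.wtSet_closedNbhd_lt hD hne
  rw [hA, wtSet, finsum_mem_coe_finset] at key
  refine key.trans_le (Nat.add_le_add_left (finsum_mem_le_sum E (fun x hx hxE => ?_)
    fun x hx hxE => hb x hxE hx) _)
  exact weightGain_eq_zero fun w hw hxw => hxE (hE x hx w hw hxw)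

theorem not_adj_of_deg_eq_one (hG : MinimalCounterexample G) {u v : V} (hu : deg G u = 1)
    (hv : deg G v = 1) : ¬ G.Adj u v := by
  classical
  intro huv
  have hNu := adj_iff_of_deg_eq_one hu huv
  have hNv := adj_iff_of_deg_eq_one hv huv.symm
  have hlt := hG.sum_wt_lt_of_closedNbhd_eq (A := {u, v}) (Set.pairwise_singleton u _)
    (Set.singleton_nonempty u) (by ext; simp [mem_closedNbhd, hNu]) ∅ 0
    (by simp; grind [adj_comm]) (by simp)
  simp [Finset.sum_pair huv.ne, wt_eq_degWeight, hu, hv, degWeight] at hlt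

theorem false_of_pendant_and_pendant_path (hG : MinimalCounterexample G) {y a b c₁ c₂ : V}
    (hy : ∀ x, G.Adj y x ↔ x = a) (ha : ∀ x, G.Adj a x ↔ x = y ∨ x = b)
    (hb : ∀ x, G.Adj b x ↔ x = a ∨ x = c₁ ∨ x = c₂) (hc₁ : ∀ x, G.Adj c₁ x ↔ x = b)
    (hc₂ : deg G c₂ ≤ 2) (hyb : y ≠ b) (hac₁ : a ≠ c₁) (hac₂ : a ≠ c₂) (hc₁₂ : c₁ ≠ c₂) :
    False := by
  classical
  have hab := (ha b).2 (Or.inr rfl)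
  have hbc₁ := (hb c₁).2 (by simp)
  have hbc₂ := (hb c₂).2 (by simp)
  obtain ⟨z, hz⟩ := exists_adj_imp_of_deg_le_two hc₂ hbc₂.symm
  have hlt := hG.sum_wt_lt_of_closedNbhd_eq (A := {a, b, c₁, c₂}) (Set.pairwise_singleton b _)
    (Set.singleton_nonempty b) (by ext; simp [mem_closedNbhd, hb]; tauto) {y, z} (fun _ => 5)
    (by simp; grind [adj_comm]) fun x _ _ =>
      weightGain_le_five (ncard_neighborSet_inter_le_one (by simp; grind [adj_comm]))
  rw [Finset.sum_insert (by simp [hab.ne, hac₁, hac₂]),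
    Finset.sum_insert (by simp [hbc₁.ne, hbc₂.ne]), Finset.sum_pair hc₁₂, Set.ncard_singleton, Finset.sum_const, smul_eq_mul] at hlt
  have hwa : wt G a = 6 := by simp [wt_eq_degWeight, deg_eq_two_of_adj_iff hyb ha, degWeight]
  have hwb : wt G b = 5 := by
    simp [wt_eq_degWeight, deg_eq_three_of_adj_iff hac₁ hac₂ hc₁₂ hb, degWeight]
  have hwc₁ : wt G c₁ = 9 := by simp [wt_eq_degWeight, deg_eq_one_of_adj_iff hc₁, degWeight]
  have := six_le_wt hc₂
  have := Finset.card_le_two (a := y) (b := z)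
  omega

theorem false_of_pendant_path_of_deg_eq_three (hG : MinimalCounterexample G) {y a b : V}
    (hy : ∀ x, G.Adj y x ↔ x = a) (ha : ∀ x, G.Adj a x ↔ x = y ∨ x = b) (hyb : y ≠ b)
    (hb : deg G b = 3) : False := by
  classical
  have hab := (ha b).2 (Or.inr rfl)
  obtain ⟨c₁, c₂, hc₁a, hc₂a, hc₁₂, hNb⟩ := exists_adj_iff_of_deg_eq_three hb hab.symm
  have hbc₁ := (hNb c₁).2 (by simp)
  have hbc₂ := (hNb c₂).2 (by simp)
  by_cases hbad₁ : deg G c₁ = 1 ∧ deg G c₂ ≤ 2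
  · exact hG.false_of_pendant_and_pendant_path hy ha hNb
      (adj_iff_of_deg_eq_one hbad₁.1 hbc₁.symm) hbad₁.2 hyb hc₁a.symm hc₂a.symm hc₁₂
  by_cases hbad₂ : deg G c₂ = 1 ∧ deg G c₁ ≤ 2
  · exact hG.false_of_pendant_and_pendant_path hy ha (fun x => (hNb x).trans (by tauto))
      (adj_iff_of_deg_eq_one hbad₂.1 hbc₂.symm) hbad₂.2 hyb hc₂a.symm hc₁a.symm hc₁₂.symm
  have hlt := hG.sum_wt_lt_of_closedNbhd_eq (A := {y, a, b}) (Set.pairwise_singleton a _)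
    (Set.singleton_nonempty a) (by ext; simp [mem_closedNbhd, ha]; tauto) {c₁, c₂}
    (fun x => degWeight (deg G x - 1) - degWeight (deg G x)) (by simp; grind [adj_comm])
    fun x _ _ => weightGain_le (ncard_neighborSet_inter_le_one (by simp; grind [adj_comm]))
  rw [Finset.sum_insert (by grind), Finset.sum_pair hab.ne, Finset.sum_pair hc₁₂,
    wt_eq_degWeight y, wt_eq_degWeight a, wt_eq_degWeight b, deg_eq_one_of_adj_iff hy,
    deg_eq_two_of_adj_iff hyb ha, hb, Set.ncard_singleton] at hlt
  have := one_le_deg_of_adj hbc₁.symm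
  have := one_le_deg_of_adj hbc₂.symm
  have := hG.deg_le_three c₁
  have := hG.deg_le_three c₂
  interval_cases (deg G c₁) <;> interval_cases (deg G c₂) <;>
    simp [degWeight] at hlt hbad₁ hbad₂

theorem not_adj_of_deg_eq_one_of_deg_eq_two (hG : MinimalCounterexample G) {y a : V}
    (hy : deg G y = 1) (ha : deg G a = 2) : ¬ G.Adj a y := by
  classical
  intro hay
  have hNy := adj_iff_of_deg_eq_one hy hay.symm
  obtain ⟨b, hby, hNa⟩ := exists_adj_iff_of_deg_eq_two ha hay
  have hab := (hNa b).2 (Or.inr rfl)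
  by_cases hb3 : deg G b = 3
  · exact hG.false_of_pendant_path_of_deg_eq_three hNy hNa hby.symm hb3
  have hb2 : deg G b ≤ 2 := by have := hG.deg_le_three b; omega
  obtain ⟨z, hz⟩ := exists_adj_imp_of_deg_le_two hb2 hab.symm
  have hlt := hG.sum_wt_lt_of_closedNbhd_eq (A := {y, a, b}) (Set.pairwise_singleton a _)
    (Set.singleton_nonempty a) (by ext; simp [mem_closedNbhd, hNa]; tauto) {z} (fun _ => 5)
    (by simp; grind [adj_comm]) fun x _ _ =>
      weightGain_le_five (ncard_neighborSet_inter_le_one (by simp; grind [adj_comm]))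
  rw [Finset.sum_insert (by grind), Finset.sum_pair hab.ne, wt_eq_degWeight y,
    wt_eq_degWeight a, hy, ha, Set.ncard_singleton, Finset.sum_singleton] at hlt
  have := six_le_wt hb2
  simp [degWeight] at hlt
  omega

theorem two_le_deg_of_adj_of_deg_eq_two (hG : MinimalCounterexample G) {a x : V}
    (ha : deg G a = 2) (hax : G.Adj a x) : 2 ≤ deg G x := by
  have := one_le_deg_of_adj hax.symm
  by_contra! h
  exact hG.not_adj_of_deg_eq_one_of_deg_eq_two (by omega) ha hax

theorem weightGain_closedNbhd_singleton_le (hG : MinimalCounterexample G) {v x : V}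
    (hnb : ∀ u, G.Adj v u → deg G u ≤ 2) (hx : x ∉ closedNbhd G {v}) :
    weightGain G (closedNbhd G {v}) x ≤ 3 := by
  simp only [mem_closedNbhd, Set.mem_singleton_iff, exists_eq_left, not_or] at hx
  have hmem : ∀ w ∈ closedNbhd G {v}, G.Adj x w → G.Adj v w := by
    rintro w (rfl | ⟨_, rfl, hvw⟩) hxw
    exacts [absurd hxw.symm hx.2, hvw]
  by_cases h : ∃ w ∈ closedNbhd G {v}, G.Adj x w
  · obtain ⟨w, hw, hxw⟩ := h
    have hvw := hmem w hw hxw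
    have hdw := (hnb w hvw).antisymm (two_le_deg_of_adj_of_adj hvw.symm hxw.symm (Ne.symm hx.1))
    have hdx := hG.two_le_deg_of_adj_of_deg_eq_two hdw hxw.symm
    have := hG.deg_le_three x
    refine (weightGain_le (ncard_neighborSet_inter_le_one fun w₁ hw₁ w₂ hw₂ h₁ h₂ => ?_)).trans ?_
    · by_contra hne
      exact hx.1 (hG.noFourCycle.eq_of_adj hne (hmem w₁ hw₁ h₁).symm (hmem w₂ hw₂ h₂).symm h₁.symm
        h₂.symm).symm
    · interval_cases (deg G x) <;> simp [degWeight]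
  · rw [weightGain_eq_zero (by simpa using h)]
    omega

theorem exists_adj_deg_eq_three_of_deg_eq_three (hG : MinimalCounterexample G) {v : V}
    (hv : deg G v = 3) : ∃ u, G.Adj v u ∧ deg G u = 3 := by
  classical
  by_contra! hnb
  replace hnb : ∀ u, G.Adj v u → deg G u ≤ 2 := fun u hu => by
    have := hG.deg_le_three u; have := hnb u hu; omega
  obtain ⟨u₁, u₂, u₃, h₁₂, h₁₃, h₂₃, hN⟩ := Set.ncard_eq_three.1 hv
  have hNv : ∀ x, G.Adj v x ↔ x = u₁ ∨ x = u₂ ∨ x = u₃ := Set.ext_iff.1 hN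
  have hvu₁ := (hNv u₁).2 (by simp)
  have hvu₂ := (hNv u₂).2 (by simp)
  have hvu₃ := (hNv u₃).2 (by simp)
  obtain ⟨x₁, hx₁⟩ := exists_adj_imp_of_deg_le_two (hnb u₁ hvu₁) hvu₁.symm
  obtain ⟨x₂, hx₂⟩ := exists_adj_imp_of_deg_le_two (hnb u₂ hvu₂) hvu₂.symm
  obtain ⟨x₃, hx₃⟩ := exists_adj_imp_of_deg_le_two (hnb u₃ hvu₃) hvu₃.symm
  have hA : closedNbhd G {v} = ↑({v, u₁, u₂, u₃} : Finset V) := by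
    ext; simp [mem_closedNbhd, hNv]
  have hlt := hG.sum_wt_lt_of_closedNbhd_eq (Set.pairwise_singleton v _)
    (Set.singleton_nonempty v) hA {x₁, x₂, x₃} (fun _ => 3) (by simp; grind [adj_comm])
    fun x _ hxA => hA ▸ hG.weightGain_closedNbhd_singleton_le hnb (hA ▸ hxA)
  rw [Finset.sum_insert (by simp [hvu₁.ne, hvu₂.ne, hvu₃.ne]),
    Finset.sum_insert (by simp [h₁₂, h₁₃]), Finset.sum_pair h₂₃, wt_eq_degWeight v, hv,
    Set.ncard_singleton, Finset.sum_const, smul_eq_mul] at hlt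
  have := six_le_wt (hnb u₁ hvu₁)
  have := six_le_wt (hnb u₂ hvu₂)
  have := six_le_wt (hnb u₃ hvu₃)
  have := Finset.card_le_three (a := x₁) (b := x₂) (c := x₃)
  simp [degWeight] at hlt
  omega

theorem false_of_triangle (hG : MinimalCounterexample G) {v u₁ u₂ : V}
    (hv : ∀ x, G.Adj v x ↔ x = u₁ ∨ x = u₂) (hu₁ : deg G u₁ ≤ 2) (hu₂ : deg G u₂ ≤ 2)
    (h₁₂ : G.Adj u₁ u₂) : False := by
  classical
  have hvu₁ := (hv u₁).2 (Or.inl rfl)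
  have hvu₂ := (hv u₂).2 (Or.inr rfl)
  have hN₁ := adj_iff_of_deg_eq_two
    (hu₁.antisymm (two_le_deg_of_adj_of_adj hvu₁.symm h₁₂ hvu₂.ne)) hvu₁.symm h₁₂ hvu₂.ne
  have hN₂ := adj_iff_of_deg_eq_two
    (hu₂.antisymm (two_le_deg_of_adj_of_adj hvu₂.symm h₁₂.symm hvu₁.ne)) hvu₂.symm h₁₂.symm
    hvu₁.ne
  have hlt := hG.sum_wt_lt_of_closedNbhd_eq (A := {v, u₁, u₂}) (Set.pairwise_singleton v _)
    (Set.singleton_nonempty v) (by ext; simp [mem_closedNbhd, hv]) ∅ 0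
    (by simp; grind [adj_comm]) (by simp)
  rw [Finset.sum_insert (by simp [hvu₁.ne, hvu₂.ne]), Finset.sum_pair h₁₂.ne, wt_eq_degWeight v,
    deg_eq_two_of_adj_iff h₁₂.ne hv] at hlt
  have := six_le_wt hu₁
  have := six_le_wt hu₂
  simp [degWeight] at hlt
  omega

theorem deg_eq_two_of_path (hG : MinimalCounterexample G) {p a b c q : V}
    (ha : ∀ x, G.Adj a x ↔ x = b ∨ x = p) (hb : ∀ x, G.Adj b x ↔ x = a ∨ x = c)
    (hc : ∀ x, G.Adj c x ↔ x = b ∨ x = q) (hpb : p ≠ b) (hac : a ≠ c) (hqb : q ≠ b)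
    (hnac : ¬ G.Adj a c) : deg G p = 2 ∧ deg G q = 2 := by
  classical
  have hap := (ha p).2 (Or.inr rfl)
  have hcq := (hc q).2 (Or.inr rfl)
  have hab := (ha b).2 (Or.inl rfl)
  have hcb := (hc b).2 (Or.inl rfl)
  have hpq : p ≠ q := fun h => hpb (hG.noFourCycle.eq_of_adj hac hab hcb hap (h ▸ hcq)).symm
  have hlt := hG.sum_wt_lt_of_closedNbhd_eq (A := {a, b, c}) (Set.pairwise_singleton b _)
    (Set.singleton_nonempty b) (by ext; simp [mem_closedNbhd, hb]; tauto) {p, q}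
    (fun x => degWeight (deg G x - 1) - degWeight (deg G x)) (by simp; grind [adj_comm])
    fun x _ _ => weightGain_le (ncard_neighborSet_inter_le_one (by simp; grind [adj_comm]))
  rw [Finset.sum_insert (by simp [hab.ne, hac]), Finset.sum_pair hcb.ne', Finset.sum_pair hpq,
    wt_eq_degWeight a, wt_eq_degWeight b, wt_eq_degWeight c, deg_eq_two_of_adj_iff hpb.symm ha,
    deg_eq_two_of_adj_iff hac hb, deg_eq_two_of_adj_iff hqb.symm hc] at hlt
  have hp := hG.two_le_deg_of_adj_of_deg_eq_two (deg_eq_two_of_adj_iff hpb.symm ha) hap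
  have hq := hG.two_le_deg_of_adj_of_deg_eq_two (deg_eq_two_of_adj_iff hqb.symm hc) hcq
  have := hG.deg_le_three p
  have := hG.deg_le_three q
  interval_cases (deg G p) <;> interval_cases (deg G q) <;> simp [degWeight] at hlt ⊢

theorem false_of_five_cycle (hG : MinimalCounterexample G) {c₀ c₁ c₂ c₃ c₄ : V}
    (hc : [c₀, c₁, c₂, c₃, c₄].Nodup) (h₀₁ : G.Adj c₀ c₁) (h₁₂ : G.Adj c₁ c₂)
    (h₂₃ : G.Adj c₂ c₃) (h₃₄ : G.Adj c₃ c₄) (h₄₀ : G.Adj c₄ c₀) (hd₀ : deg G c₀ = 2)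
    (hd₁ : deg G c₁ = 2) (hd₂ : deg G c₂ = 2) (hd₃ : deg G c₃ = 2) (hd₄ : deg G c₄ = 2) :
    False := by
  classical
  simp only [List.nodup_cons, List.mem_cons, List.not_mem_nil, or_false, not_or] at hc
  have hN₀ := adj_iff_of_deg_eq_two hd₀ h₀₁ h₄₀.symm (by grind)
  have hN₁ := adj_iff_of_deg_eq_two hd₁ h₀₁.symm h₁₂ (by grind)
  have hN₂ := adj_iff_of_deg_eq_two hd₂ h₁₂.symm h₂₃ (by grind)
  have hN₃ := adj_iff_of_deg_eq_two hd₃ h₂₃.symm h₃₄ (by grind)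
  have hN₄ := adj_iff_of_deg_eq_two hd₄ h₃₄.symm h₄₀ (by grind)
  have hlt := hG.sum_wt_lt_of_closedNbhd_eq (D := {c₀, c₂}) (A := {c₀, c₁, c₂, c₃, c₄})
    (by simp [Set.pairwise_insert]; grind) (Set.insert_nonempty _ _)
    (by ext; simp [mem_closedNbhd, hN₀, hN₂]; tauto) ∅ 0 (by simp; grind [adj_comm]) (by simp)
  simp [Finset.sum_insert, hc, wt_eq_degWeight, hd₀, hd₁, hd₂, hd₃, hd₄, degWeight,
    Set.ncard_pair hc.1.2.1] at hlt

theorem false_of_six_path (hG : MinimalCounterexample G) {p₁ p₂ p₃ p₄ p₅ p₆ : V}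
    (hp : [p₁, p₂, p₃, p₄, p₅, p₆].Nodup) (h₁₂ : G.Adj p₁ p₂) (h₂₃ : G.Adj p₂ p₃)
    (h₃₄ : G.Adj p₃ p₄) (h₄₅ : G.Adj p₄ p₅) (h₅₆ : G.Adj p₅ p₆) (hd₁ : deg G p₁ = 2)
    (hd₂ : deg G p₂ = 2) (hd₃ : deg G p₃ = 2) (hd₄ : deg G p₄ = 2) (hd₅ : deg G p₅ = 2)
    (hd₆ : deg G p₆ = 2) : False := by
  classical
  simp only [List.nodup_cons, List.mem_cons, List.not_mem_nil, or_false, not_or] at hp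
  obtain ⟨q₀, -, hN₁⟩ := exists_adj_iff_of_deg_eq_two hd₁ h₁₂
  have hN₂ := adj_iff_of_deg_eq_two hd₂ h₁₂.symm h₂₃ (by grind)
  have hN₃ := adj_iff_of_deg_eq_two hd₃ h₂₃.symm h₃₄ (by grind)
  have hN₄ := adj_iff_of_deg_eq_two hd₄ h₃₄.symm h₄₅ (by grind)
  have hN₅ := adj_iff_of_deg_eq_two hd₅ h₄₅.symm h₅₆ (by grind)
  obtain ⟨q₇, -, hN₆⟩ := exists_adj_iff_of_deg_eq_two hd₆ h₅₆.symm
  have hq₀ := hG.two_le_deg_of_adj_of_deg_eq_two hd₁ ((hN₁ q₀).2 (Or.inr rfl))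
  have hq₇ := hG.two_le_deg_of_adj_of_deg_eq_two hd₆ ((hN₆ q₇).2 (Or.inr rfl))
  have := hG.deg_le_three q₀
  have := hG.deg_le_three q₇
  have hlt := hG.sum_wt_lt_of_closedNbhd_eq (D := {p₂, p₅}) (A := {p₁, p₂, p₃, p₄, p₅, p₆})
    (by simp [Set.pairwise_insert]; grind) (Set.insert_nonempty _ _)
    (by ext; simp [mem_closedNbhd, hN₂, hN₅]; tauto)
  have hwA : ∑ x ∈ {p₁, p₂, p₃, p₄, p₅, p₆}, wt G x = 36 := by
    simp [Finset.sum_insert, hp, wt_eq_degWeight, hd₁, hd₂, hd₃, hd₄, hd₅, hd₆, degWeight]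
  by_cases hq : q₀ = q₇
  · subst hq
    -- the ends share their outer neighbour `q₀`, which may lose two edges
    have hlt := hlt {q₀} (fun _ => 8) (by simp; grind [adj_comm]) fun x hx _ => by
      refine (weightGain_le (k := 2) ?_).trans ?_
      · refine (Set.ncard_le_ncard (t := {p₁, p₆}) fun w hw => ?_).trans
          ((Set.ncard_insert_le _ _).trans (by simp))
        simp at hx hw ⊢; grind [adj_comm]
      · simp at hx; subst hx; interval_cases (deg G x) <;> simp [degWeight]
    rw [hwA, Set.ncard_pair hp.2.1.2.2.1] at hlt
    simp at hlt
  · have hlt := hlt {q₀, q₇} (fun _ => 3) (by simp; grind [adj_comm]) fun x hx _ => by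
      refine (weightGain_le (ncard_neighborSet_inter_le_one (by simp; grind [adj_comm]))).trans ?_
      simp at hx; rcases hx with rfl | rfl <;> interval_cases (deg G x) <;> simp [degWeight]
    rw [hwA, Set.ncard_pair hp.2.1.2.2.1, Finset.sum_pair hq] at hlt
    simp at hlt

theorem exists_adj_deg_eq_three_of_deg_eq_two (hG : MinimalCounterexample G) {v : V}
    (hv : deg G v = 2) : ∃ u, G.Adj v u ∧ deg G u = 3 := by
  by_contra! hnb
  replace hnb : ∀ u, G.Adj v u → deg G u ≤ 2 := fun u hu => by
    have := hG.deg_le_three u; have := hnb u hu; omega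
  obtain ⟨u₁, u₂, h₁₂, hN⟩ := Set.ncard_eq_two.1 hv
  have hNv : ∀ x, G.Adj v x ↔ x = u₁ ∨ x = u₂ := Set.ext_iff.1 hN
  have hvu₁ := (hNv u₁).2 (Or.inl rfl)
  have hvu₂ := (hNv u₂).2 (Or.inr rfl)
  by_cases hu₁₂ : G.Adj u₁ u₂
  · exact hG.false_of_triangle hNv (hnb u₁ hvu₁) (hnb u₂ hvu₂) hu₁₂
  have hdu₁ := (hnb u₁ hvu₁).antisymm (hG.two_le_deg_of_adj_of_deg_eq_two hv hvu₁)
  have hdu₂ := (hnb u₂ hvu₂).antisymm (hG.two_le_deg_of_adj_of_deg_eq_two hv hvu₂)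
  obtain ⟨x₁, hx₁v, hNu₁⟩ := exists_adj_iff_of_deg_eq_two hdu₁ hvu₁.symm
  obtain ⟨x₂, hx₂v, hNu₂⟩ := exists_adj_iff_of_deg_eq_two hdu₂ hvu₂.symm
  have hu₁x₁ := (hNu₁ x₁).2 (Or.inr rfl)
  have hu₂x₂ := (hNu₂ x₂).2 (Or.inr rfl)
  have hx₁₂ : x₁ ≠ x₂ := fun h =>
    hx₁v (hG.noFourCycle.eq_of_adj h₁₂ hvu₁.symm hvu₂.symm hu₁x₁ (h ▸ hu₂x₂)).symm
  obtain ⟨hdx₁, hdx₂⟩ := hG.deg_eq_two_of_path hNu₁ hNv hNu₂ hx₁v h₁₂ hx₂v hu₁₂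
  obtain ⟨y₁, hy₁u₁, hNx₁⟩ := exists_adj_iff_of_deg_eq_two hdx₁ hu₁x₁.symm
  have hx₁y₁ := (hNx₁ y₁).2 (Or.inr rfl)
  by_cases hx₁x₂ : G.Adj x₁ x₂
  · exact hG.false_of_five_cycle (by simp; grind [adj_comm]) hvu₁ hu₁x₁ hx₁x₂ hu₂x₂.symm
      hvu₂.symm hv hdu₁ hdx₁ hdx₂ hdu₂
  have hnx₁v : ¬ G.Adj x₁ v := fun h => by
    rcases (hNv x₁).1 h.symm with rfl | rfl
    exacts [G.irrefl hu₁x₁, hu₁₂ hu₁x₁]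
  have hdy₁ := (hG.deg_eq_two_of_path hNx₁ (fun x => (hNu₁ x).trans or_comm) hNv hy₁u₁ hx₁v
    h₁₂.symm hnx₁v).1
  exact hG.false_of_six_path (p₁ := y₁) (by simp; grind [adj_comm, SimpleGraph.irrefl])
    hx₁y₁.symm hu₁x₁.symm hvu₁.symm hvu₂ hu₂x₂ hdy₁ hdx₁ hdu₁ hv hdu₂ hdx₂

theorem exists_adj_deg_eq_three (hG : MinimalCounterexample G) {v : V} (hv : 1 ≤ deg G v) :
    ∃ u, G.Adj v u ∧ deg G u = 3 := by
  have := hG.deg_le_three v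
  rcases (by omega : deg G v = 1 ∨ deg G v = 2 ∨ deg G v = 3) with h | h | h
  · obtain ⟨u, hN⟩ := Set.ncard_eq_one.1 h
    have hvu : G.Adj v u := (Set.ext_iff.1 hN u).2 rfl
    have h1 : deg G u ≠ 1 := fun hu => hG.not_adj_of_deg_eq_one h hu hvu
    have h2 : deg G u ≠ 2 := fun hu => hG.not_adj_of_deg_eq_one_of_deg_eq_two h hu hvu.symm
    have := one_le_deg_of_adj hvu.symm
    have := hG.deg_le_three u
    exact ⟨u, hvu, by omega⟩
  · exact hG.exists_adj_deg_eq_three_of_deg_eq_two h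
  · exact hG.exists_adj_deg_eq_three_of_deg_eq_three h

end MinimalCounterexample

end

/-- A minimal counterexample has no vertex of degree at least 1 all of whose
neighbors have degree at most 2. -/
theorem no_vertex_with_only_low_degree_neighbors {V : Type*} [Fintype V]
    (G : SimpleGraph V) (hG : MinimalCounterexample G) :
    ¬ ∃ v : V, 1 ≤ deg G v ∧ ∀ u, G.Adj v u → deg G u ≤ 2 := by
  rintro ⟨v, hv, hnb⟩
  obtain ⟨u, hvu, hu⟩ := hG.exists_adj_deg_eq_three hv
  have := hnb u hvu
  omega
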